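/- arXiv:0802.0476 — 2 statements merged into one kernel-verified Lean document; each statement's English description precedes it below -/
import Mathlib

section
/- For every n ≥ 1, the set C of all n×n complex matrices φ = (φ_{ij}) for which there exist x, y ∈ ℂⁿ with Σ_i |x_i|² ≤ 1, Σ_j |y_j|² ≤ 1 and |φ_{ij}| ≤ |x_i|·|y_j| for all i, j, is a convex subset of the vector space of n×n complex matrices. -/
/-!
Given witnesses `(x, y)` for `φ` and `(x', y')` for `φ'`, the convex combination
`a • φ + b • φ'` is witnessed by the vectors with moduli `√(a|x_i|² + b|x'_i|²)` and
`√(a|y_j|² + b|y'_j|²)`: their squared norms are the same convex combinations of those of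
`x, x'` and `y, y'`, and the entrywise bound is the Cauchy–Schwarz inequality
`a p q + b r s ≤ √(a p² + b r²) √(a q² + b s²)`.
-/

open Finset

theorem Real.mul_add_mul_le_sqrt_mul_sqrt {a b : ℝ} (ha : 0 ≤ a) (hb : 0 ≤ b) (p q r s : ℝ) :
    a * (p * q) + b * (r * s) ≤ √(a * p ^ 2 + b * r ^ 2) * √(a * q ^ 2 + b * s ^ 2) := by
  rw [← Real.sqrt_mul (by positivity)]
  apply Real.le_sqrt_of_sq_le
  nlinarith [mul_nonneg (mul_nonneg ha hb) (sq_nonneg (p * s - r * q))]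

section mixNorm

variable {𝕜 ι : Type*} [RCLike 𝕜]

noncomputable def mixNorm (a b : ℝ) (x x' : ι → 𝕜) (i : ι) : 𝕜 :=
  (√(a * ‖x i‖ ^ 2 + b * ‖x' i‖ ^ 2) : ℝ)

theorem norm_mixNorm (a b : ℝ) (x x' : ι → 𝕜) (i : ι) :
    ‖mixNorm a b x x' i‖ = √(a * ‖x i‖ ^ 2 + b * ‖x' i‖ ^ 2) := by
  rw [mixNorm, RCLike.norm_ofReal, abs_of_nonneg (Real.sqrt_nonneg _)]

theorem sum_norm_mixNorm_sq [Fintype ι] {a b : ℝ} (ha : 0 ≤ a) (hb : 0 ≤ b) (x x' : ι → 𝕜) :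
    ∑ i, ‖mixNorm a b x x' i‖ ^ 2 = a * ∑ i, ‖x i‖ ^ 2 + b * ∑ i, ‖x' i‖ ^ 2 := by
  rw [mul_sum, mul_sum, ← sum_add_distrib]
  refine sum_congr rfl fun i _ => ?_
  rw [norm_mixNorm, Real.sq_sqrt (by positivity)]

theorem sum_norm_mixNorm_sq_le_one [Fintype ι] {a b : ℝ} (ha : 0 ≤ a) (hb : 0 ≤ b)
    (hab : a + b = 1) {x x' : ι → 𝕜} (hx : ∑ i, ‖x i‖ ^ 2 ≤ 1) (hx' : ∑ i, ‖x' i‖ ^ 2 ≤ 1) :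
    ∑ i, ‖mixNorm a b x x' i‖ ^ 2 ≤ 1 := by
  rw [sum_norm_mixNorm_sq ha hb]
  nlinarith

end mixNorm

namespace Matrix

variable {ι κ E : Type*} [Fintype ι] [Fintype κ] [SeminormedAddCommGroup E] [NormedSpace ℝ E]

variable (𝕜 : Type*) [RCLike 𝕜] in
def productDominated : Set (Matrix ι κ E) :=
  {φ | ∃ (x : ι → 𝕜) (y : κ → 𝕜), ∑ i, ‖x i‖ ^ 2 ≤ 1 ∧ ∑ j, ‖y j‖ ^ 2 ≤ 1 ∧
    ∀ i j, ‖φ i j‖ ≤ ‖x i‖ * ‖y j‖}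

theorem convex_productDominated (𝕜 : Type*) [RCLike 𝕜] :
    Convex ℝ (productDominated 𝕜 : Set (Matrix ι κ E)) := by
  rintro φ ⟨x, y, hx, hy, hφ⟩ φ' ⟨x', y', hx', hy', hφ'⟩ a b ha hb hab
  refine ⟨mixNorm a b x x', mixNorm a b y y', sum_norm_mixNorm_sq_le_one ha hb hab hx hx',
    sum_norm_mixNorm_sq_le_one ha hb hab hy hy', fun i j => ?_⟩
  calc ‖a • φ i j + b • φ' i j‖
      ≤ a * ‖φ i j‖ + b * ‖φ' i j‖ := by
        refine (norm_add_le _ _).trans_eq ?_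
        rw [norm_smul, norm_smul, Real.norm_of_nonneg ha, Real.norm_of_nonneg hb]
    _ ≤ a * (‖x i‖ * ‖y j‖) + b * (‖x' i‖ * ‖y' j‖) := by
        gcongr
        exacts [hφ i j, hφ' i j]
    _ ≤ ‖mixNorm a b x x' i‖ * ‖mixNorm a b y y' j‖ := by
        rw [norm_mixNorm, norm_mixNorm]
        exact Real.mul_add_mul_le_sqrt_mul_sqrt ha hb _ _ _ _

end Matrix

theorem statement1_general (n : ℕ) :
    Convex ℝ {φ : Matrix (Fin n) (Fin n) ℂ | ∃ x y : Fin n → ℂ,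
      (∑ i, ‖x i‖ ^ 2) ≤ 1 ∧ (∑ j, ‖y j‖ ^ 2) ≤ 1 ∧
      ∀ i j, ‖φ i j‖ ≤ ‖x i‖ * ‖y j‖} :=
  Matrix.convex_productDominated ℂ

/-- For every `n ≥ 1`, the set `C` of all `n×n` complex matrices `φ`
for which there exist `x, y ∈ ℂⁿ` with `Σ|x_i|² ≤ 1`, `Σ|y_j|² ≤ 1` and
`|φ_{ij}| ≤ |x_i||y_j|` for all `i, j`, is convex (as a subset of the real vector space
of `n×n` complex matrices). -/
theorem statement1 (n : ℕ) (hn : 1 ≤ n) :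
    Convex ℝ {φ : Matrix (Fin n) (Fin n) ℂ | ∃ x y : Fin n → ℂ,
      (∑ i, ‖x i‖ ^ 2) ≤ 1 ∧ (∑ j, ‖y j‖ ^ 2) ≤ 1 ∧
      ∀ i j, ‖φ i j‖ ≤ ‖x i‖ * ‖y j‖} :=
  statement1_general n
end

section
/- For every n ≥ 1 and every n×n complex matrix φ = (φ_{ij}), the following are equivalent: (a) there exist x, y ∈ ℂⁿ with Σ_i |x_i|² ≤ 1, Σ_j |y_j|² ≤ 1 and |φ_{ij}| ≤ |x_i|·|y_j| for all i, j; (b) there exist vectors h_1, …, h_n and k_1, …, k_n in ℂⁿ such that φ_{ij} = Σ_{m=1}^n h_i(m) k_j(m) for all i, j, with Σ_{i=1}^n ‖h_i‖²_{ℓⁿ₁} ≤ 1 and Σ_{j=1}^n ‖k_j‖²_{ℓⁿ_∞} ≤ 1. -/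
noncomputable section
open scoped BigOperators

section Factorization

variable {ι κ R : Type*} [Fintype ι]

theorem norm_sum_mul_le_sum_norm_mul_iSup_norm [SeminormedRing R] (a b : ι → R) :
    ‖∑ m, a m * b m‖ ≤ (∑ m, ‖a m‖) * ⨆ m, ‖b m‖ := by
  have hb : BddAbove (Set.range fun m => ‖b m‖) := (Set.finite_range _).bddAbove
  calc ‖∑ m, a m * b m‖ ≤ ∑ m, ‖a m‖ * ‖b m‖ :=
        (norm_sum_le _ _).trans (Finset.sum_le_sum fun m _ => norm_mul_le _ _)
    _ ≤ ∑ m, ‖a m‖ * ⨆ m', ‖b m'‖ := by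
        gcongr with m
        exact le_ciSup hb m
    _ = (∑ m, ‖a m‖) * ⨆ m, ‖b m‖ := (Finset.sum_mul _ _ _).symm

/-- The diagonal factorization `φ i j = x i * (φ i j / x i)`; where `x i = 0` the junk value
`φ i j / 0 = 0` is harmless because the hypothesis forces `φ i j = 0`. -/
theorem exists_factorization_of_norm_le_mul [DecidableEq ι] (φ : ι → κ → ℂ) (x : ι → ℂ)
    (y : κ → ℂ) (hφ : ∀ i j, ‖φ i j‖ ≤ ‖x i‖ * ‖y j‖) :
    ∃ (h : ι → ι → ℂ) (k : κ → ι → ℂ), (∀ i j, φ i j = ∑ m, h i m * k j m) ∧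
      (∀ i, ∑ m, ‖h i m‖ = ‖x i‖) ∧ ∀ j, ⨆ m, ‖k j m‖ ≤ ‖y j‖ := by
  refine ⟨fun i => Pi.single i (x i), fun j m => φ m j / x m, fun i j => ?_, fun i => ?_,
    fun j => Real.iSup_le (fun m => ?_) (norm_nonneg _)⟩
  · simp only [Pi.single_apply, ite_mul, zero_mul, Finset.sum_ite_eq', Finset.mem_univ,
      if_true]
    by_cases hxi : x i = 0
    · have : ‖φ i j‖ ≤ 0 := by simpa [hxi] using hφ i j
      simp [hxi, norm_le_zero_iff.mp this]
    · exact (mul_div_cancel₀ _ hxi).symm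
  · simp [Pi.single_apply, apply_ite]
  · rw [norm_div]
    exact div_le_of_le_mul₀ (norm_nonneg _) (norm_nonneg _) ((hφ m j).trans_eq (mul_comm _ _))

end Factorization

theorem statement2_general (n : ℕ) (φ : Matrix (Fin n) (Fin n) ℂ) :
    (∃ x y : Fin n → ℂ,
      (∑ i, ‖x i‖ ^ 2) ≤ 1 ∧ (∑ j, ‖y j‖ ^ 2) ≤ 1 ∧
      ∀ i j, ‖φ i j‖ ≤ ‖x i‖ * ‖y j‖) ↔
    (∃ h k : Fin n → Fin n → ℂ,
      (∀ i j, φ i j = ∑ m, h i m * k j m) ∧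
      (∑ i, (∑ m, ‖h i m‖) ^ 2) ≤ 1 ∧
      (∑ j, (⨆ m, ‖k j m‖) ^ 2) ≤ 1) := by
  have iSup_norm_nonneg (v : Fin n → ℂ) : 0 ≤ ⨆ m, ‖v m‖ :=
    Real.iSup_nonneg fun m => norm_nonneg _
  constructor
  · rintro ⟨x, y, hx, hy, hφ⟩
    obtain ⟨h, k, hfac, hh, hk⟩ := exists_factorization_of_norm_le_mul φ x y hφ
    refine ⟨h, k, hfac, by simpa only [hh] using hx, le_trans ?_ hy⟩
    gcongr with j
    · exact iSup_norm_nonneg (k j)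
    · exact hk j
  · rintro ⟨h, k, hfac, hh, hk⟩
    refine ⟨fun i => ((∑ m, ‖h i m‖ : ℝ) : ℂ), fun j => ((⨆ m, ‖k j m‖ : ℝ) : ℂ), ?_, ?_,
      fun i j => ?_⟩
    · simpa only [Complex.norm_of_nonneg (Finset.sum_nonneg fun _ _ => norm_nonneg _)]
        using hh
    · simpa only [Complex.norm_of_nonneg (iSup_norm_nonneg _)] using hk
    · rw [Complex.norm_of_nonneg (Finset.sum_nonneg fun _ _ => norm_nonneg _),
        Complex.norm_of_nonneg (iSup_norm_nonneg _), hfac i j]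
      exact norm_sum_mul_le_sum_norm_mul_iSup_norm _ _

/-- For every `n ≥ 1` and every `n×n` complex matrix `φ`, the following
are equivalent: (a) there exist `x, y ∈ ℂⁿ` with `Σ|x_i|² ≤ 1`, `Σ|y_j|² ≤ 1` and
`|φ_{ij}| ≤ |x_i||y_j|`; (b) there exist `h_1,…,h_n` and `k_1,…,k_n` in `ℂⁿ` with
`φ_{ij} = Σ_m h_i(m) k_j(m)`, `Σ_i ‖h_i‖²_{ℓⁿ₁} ≤ 1` and `Σ_j ‖k_j‖²_{ℓⁿ_∞} ≤ 1`. -/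
theorem statement2 (n : ℕ) (hn : 1 ≤ n) (φ : Matrix (Fin n) (Fin n) ℂ) :
    (∃ x y : Fin n → ℂ,
      (∑ i, ‖x i‖ ^ 2) ≤ 1 ∧ (∑ j, ‖y j‖ ^ 2) ≤ 1 ∧
      ∀ i j, ‖φ i j‖ ≤ ‖x i‖ * ‖y j‖) ↔
    (∃ h k : Fin n → Fin n → ℂ,
      (∀ i j, φ i j = ∑ m, h i m * k j m) ∧
      (∑ i, (∑ m, ‖h i m‖) ^ 2) ≤ 1 ∧
      (∑ j, (⨆ m, ‖k j m‖) ^ 2) ≤ 1) :=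
  statement2_general n φ
end
end
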